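/- (Instance of Theorem 3.2 of the paper for the 3-ball.) For every R > 0, the survival probability S₃(t) = ∫_0^R 4π r² · g(r, t) dr is differentiable at every t > 0 and satisfies S₃'(t) = −f₃^exit(t); that is, the exit-time density of the 3-ball equals minus the time derivative of the total mass of the forward Kolmogorov solution. -/

import Mathlib

open Real Filter Topology MeasureTheory

/-- Radially symmetric forward Kolmogorov solution for a standard 3-dimensional
Brownian motion started at the center of the ball of radius `R` and killed at its
boundary. -/
noncomputable def g (R r t : ℝ) : ℝ :=
  ∑' k : ℕ, (((k : ℝ) + 1) * π / (2 * π * R ^ 2 * r)) *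
    Real.sin (((k : ℝ) + 1) * π * r / R) *
    Real.exp (-(((k : ℝ) + 1) ^ 2 * π ^ 2 * t) / (2 * R ^ 2))

/-- Exit-time density of a standard 3-dimensional Brownian motion started at the
center of the ball of radius `R` and killed at its boundary:
`f₃^exit(t) = (π²/R²) ∑_{k≥1} (-1)^{k+1} k² exp(-k²π²t/(2R²))`. -/
noncomputable def f₃exit (R t : ℝ) : ℝ :=
  (π ^ 2 / R ^ 2) * ∑' k : ℕ, (-1 : ℝ) ^ k * ((k : ℝ) + 1) ^ 2 *
    Real.exp (-(((k : ℝ) + 1) ^ 2 * π ^ 2 * t) / (2 * R ^ 2))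

/-!
Integrating the series for `g` term by term, the `k`-th mode contributes
`4π ∫₀ᴿ r² · (k+1)π/(2πR²r) · sin((k+1)πr/R) dr = 2(-1)ᵏ`, so that
`S₃(t) = ∑ₖ 2(-1)ᵏ e^{-λₖ t}` with `λₖ = (k+1)²π²/(2R²)`. On `t > t₀ > 0` the factors
`e^{-λₖ t}` beat every power of `k`, which justifies the term-by-term integration as well as the
term-by-term differentiation, and `-∑ₖ 2λₖ(-1)ᵏ e^{-λₖ t}` is `-f₃^exit(t)`.
-/

open Set

lemma summable_pow_mul_exp_neg_sq_mul {c : ℝ} (hc : 0 < c) (p : ℕ) :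
    Summable fun k : ℕ => ((k : ℝ) + 1) ^ p * exp (-(((k : ℝ) + 1) ^ 2 * c)) := by
  have hshift := (summable_nat_add_iff 1).mpr (summable_pow_mul_exp_neg_nat_mul p hc)
  refine hshift.of_nonneg_of_le (fun k => by positivity) fun k => ?_
  push_cast
  gcongr
  have hk : (k : ℝ) + 1 ≤ ((k : ℝ) + 1) ^ 2 := by nlinarith [(Nat.cast_nonneg k : (0 : ℝ) ≤ k)]
  nlinarith [mul_le_mul_of_nonneg_right hk hc.le]

lemma integral_tsum_mul_of_norm_le {α ι : Type*} [MeasurableSpace α] [Countable ι]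
    {μ : Measure α} [IsFiniteMeasure μ] {c : ι → ℝ} {φ : ι → α → ℝ} {M : ℝ}
    (hc : Summable fun k => ‖c k‖) (hφ : ∀ k, Integrable (φ k) μ)
    (hM : ∀ k, ∀ᵐ x ∂μ, ‖φ k x‖ ≤ M) :
    ∫ x, ∑' k, c k * φ k x ∂μ = ∑' k, c k * ∫ x, φ k x ∂μ := by
  have hbound : ∀ k, ∫ x, ‖c k * φ k x‖ ∂μ ≤ ‖c k‖ * (M * μ.real univ) := fun k =>
    calc ∫ x, ‖c k * φ k x‖ ∂μ = ‖c k‖ * ∫ x, ‖φ k x‖ ∂μ := by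
          simp only [norm_mul, integral_const_mul]
      _ ≤ ‖c k‖ * (M * μ.real univ) := by
          gcongr
          refine (le_abs_self _).trans ?_
          simpa using
            norm_integral_le_of_norm_le_const (f := fun x => ‖φ k x‖) (by simpa using hM k)
  rw [← integral_tsum_of_summable_integral_norm (fun k => (hφ k).const_mul (c k))
    ((hc.mul_right _).of_nonneg_of_le (fun k => integral_nonneg fun _ => norm_nonneg _) hbound)]
  simp only [integral_const_mul]

lemma hasDerivAt_tsum_mul_exp_neg_mul {a ν : ℕ → ℝ} {t₀ t : ℝ} (hν : ∀ k, 0 ≤ ν k)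
    (ht₀ : t₀ < t) (hderiv : Summable fun k => ‖a k‖ * ν k * exp (-(ν k * t₀)))
    (hsum : Summable fun k => a k * exp (-(ν k * t))) :
    HasDerivAt (fun s => ∑' k, a k * exp (-(ν k * s)))
      (∑' k, -(ν k * a k * exp (-(ν k * t)))) t := by
  refine hasDerivAt_tsum_of_isPreconnected (g := fun k s => a k * exp (-(ν k * s)))
    (g' := fun k s => -(ν k * a k * exp (-(ν k * s)))) hderiv isOpen_Ioi isPreconnected_Ioi
    (fun k s _ => ?_) (fun k s hs => ?_) ht₀ hsum ht₀
  · have hexp := ((hasDerivAt_id' s).const_mul (-ν k)).exp.const_mul (a k)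
    simp only [neg_mul] at hexp
    exact hexp.congr_deriv (by ring)
  · have hνk := hν k
    rw [norm_neg, norm_mul, norm_mul, Real.norm_of_nonneg hνk, Real.norm_of_nonneg (exp_pos _).le,
      mul_comm (ν k)]
    gcongr
    exact le_of_lt hs

lemma integral_mul_sin_mul {b : ℝ} (hb : b ≠ 0) (x : ℝ) :
    ∫ r in (0 : ℝ)..x, r * sin (b * r) = sin (b * x) / b ^ 2 - x * cos (b * x) / b := by
  have hderiv : ∀ r, HasDerivAt (fun r => sin (b * r) / b ^ 2 - r * cos (b * r) / b)
      (r * sin (b * r)) r := by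
    intro r
    have hlin := (hasDerivAt_id' r).const_mul b
    refine ((hlin.sin.div_const (b ^ 2)).sub (((hasDerivAt_id' r).mul hlin.cos).div_const b))
      |>.congr_deriv ?_
    field_simp
    ring
  rw [intervalIntegral.integral_eq_sub_of_hasDerivAt (fun r _ => hderiv r)
    ((by fun_prop : Continuous fun r => r * sin (b * r)).intervalIntegrable _ _)]
  simp

/-- Half the Dirichlet eigenvalue `((k + 1) π / R)²` of the `k`-th radial mode of the ball. -/
noncomputable def decayRate (R : ℝ) (k : ℕ) : ℝ := ((k : ℝ) + 1) ^ 2 * π ^ 2 / (2 * R ^ 2)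

lemma decayRate_nonneg (R : ℝ) (k : ℕ) : 0 ≤ decayRate R k := by
  unfold decayRate; positivity

lemma neg_mul_div_eq_neg_decayRate_mul (R t : ℝ) (k : ℕ) :
    -(((k : ℝ) + 1) ^ 2 * π ^ 2 * t) / (2 * R ^ 2) = -(decayRate R k * t) := by
  unfold decayRate; ring

lemma summable_pow_mul_exp_neg_decayRate_mul {R s : ℝ} (hR : R ≠ 0) (hs : 0 < s) (p : ℕ) :
    Summable fun k : ℕ => ((k : ℝ) + 1) ^ p * exp (-(decayRate R k * s)) := by
  convert summable_pow_mul_exp_neg_sq_mul (c := π ^ 2 * s / (2 * R ^ 2)) (by positivity) p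
    using 4
  unfold decayRate; ring

lemma integral_mul_sin_mode {R : ℝ} (hR : R ≠ 0) (k : ℕ) :
    ∫ r in (0 : ℝ)..R, r * sin (((k : ℝ) + 1) * π / R * r) =
      (-1) ^ k * R ^ 2 / (((k : ℝ) + 1) * π) := by
  have hk : ((k : ℝ) + 1) * π ≠ 0 := by positivity
  rw [integral_mul_sin_mul (div_ne_zero hk hR), div_mul_cancel₀ _ hR]
  have hsin : sin (((k : ℝ) + 1) * π) = 0 := by exact_mod_cast sin_nat_mul_pi (k + 1)
  have hcos : cos (((k : ℝ) + 1) * π) = (-1) ^ (k + 1) := by exact_mod_cast cos_nat_mul_pi (k + 1)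
  rw [hsin, hcos]
  field_simp
  ring

lemma four_pi_mul_sq_mul_g (R r s : ℝ) :
    4 * π * r ^ 2 * g R r s = ∑' k : ℕ, 2 * ((k : ℝ) + 1) * π / R ^ 2 *
      exp (-(decayRate R k * s)) * (r * sin (((k : ℝ) + 1) * π / R * r)) := by
  rw [g, ← tsum_mul_left]
  refine tsum_congr fun k => ?_
  rw [neg_mul_div_eq_neg_decayRate_mul]
  -- at `r = 0` the coefficient in `g` divides by zero, but both sides vanish
  rcases eq_or_ne r 0 with rfl | hr
  · simp
  · field_simp
    ring

lemma integral_four_pi_mul_sq_mul_g {R s : ℝ} (hR : 0 < R) (hs : 0 < s) :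
    ∫ r in (0 : ℝ)..R, 4 * π * r ^ 2 * g R r s =
      ∑' k : ℕ, 2 * (-1) ^ k * exp (-(decayRate R k * s)) := by
  have hcoeff : Summable fun k : ℕ =>
      ‖2 * ((k : ℝ) + 1) * π / R ^ 2 * exp (-(decayRate R k * s))‖ := by
    refine ((summable_pow_mul_exp_neg_decayRate_mul hR.ne' hs 1).mul_left (2 * π / R ^ 2)).congr
      fun k => ?_
    rw [Real.norm_of_nonneg (by positivity)]
    ring
  have hmode : ∀ k : ℕ, ∀ᵐ r ∂volume.restrict (Ioc 0 R),
      ‖r * sin (((k : ℝ) + 1) * π / R * r)‖ ≤ R := by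
    intro k
    refine (ae_restrict_mem measurableSet_Ioc).mono fun r hr => ?_
    rw [norm_mul, Real.norm_of_nonneg hr.1.le]
    exact mul_le_of_le_one_right hr.1.le (abs_sin_le_one _) |>.trans hr.2
  simp only [intervalIntegral.integral_of_le hR.le, four_pi_mul_sq_mul_g]
  rw [integral_tsum_mul_of_norm_le hcoeff (fun k => (by fun_prop : Continuous _).integrableOn_Ioc)
    hmode]
  refine tsum_congr fun k => ?_
  rw [← intervalIntegral.integral_of_le hR.le, integral_mul_sin_mode hR.ne']
  field_simp

lemma f₃exit_eq_tsum (R t : ℝ) :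
    f₃exit R t = ∑' k : ℕ, decayRate R k * (2 * (-1) ^ k) * exp (-(decayRate R k * t)) := by
  rw [f₃exit, ← tsum_mul_left]
  refine tsum_congr fun k => ?_
  rw [neg_mul_div_eq_neg_decayRate_mul]
  unfold decayRate
  ring

/-- The survival probability `S₃(t) = ∫_0^R 4πr² g(r, t) dr` is differentiable at
every `t > 0` with `S₃'(t) = -f₃^exit(t)`. -/
theorem survival₃_hasDerivAt_neg_exit (R : ℝ) (hR : 0 < R) (t : ℝ) (ht : 0 < t) :
    HasDerivAt (fun s => ∫ r in (0 : ℝ)..R, 4 * π * r ^ 2 * g R r s)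
      (-(f₃exit R t)) t := by
  have hderiv : Summable fun k : ℕ =>
      ‖2 * (-1 : ℝ) ^ k‖ * decayRate R k * exp (-(decayRate R k * (t / 2))) := by
    refine ((summable_pow_mul_exp_neg_decayRate_mul hR.ne' (half_pos ht) 2).mul_left
      (π ^ 2 / R ^ 2)).congr fun k => ?_
    simp only [norm_mul, norm_pow, norm_neg, norm_one, one_pow, Real.norm_two, decayRate]
    ring
  have hsum : Summable fun k : ℕ => 2 * (-1 : ℝ) ^ k * exp (-(decayRate R k * t)) := by
    refine Summable.of_norm (((summable_pow_mul_exp_neg_decayRate_mul hR.ne' ht 0).mul_left 2).congr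
      fun k => ?_)
    simp [abs_of_pos (exp_pos _)]
  rw [f₃exit_eq_tsum, ← tsum_neg]
  refine (hasDerivAt_tsum_mul_exp_neg_mul (decayRate_nonneg R) (half_lt_self ht) hderiv hsum)
    |>.congr_of_eventuallyEq ?_
  filter_upwards [Ioi_mem_nhds ht] with s hs using integral_four_pi_mul_sq_mul_g hR hs
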